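/- arXiv:1811.04618 — 2 statements merged into one kernel-verified Lean document; each statement's English description precedes it below -/
import Mathlib

section
/- The property of being ℵ₀-bounded passes to subgroups: if G is a topological group in which every nonempty open set is countably syndetic, then every subgroup H of G (with the subspace topology) has the same property. -/
/-!
Write `V = H ∩ W` with `W` an open neighbourhood of `1` in `G` (translating reduces to this case)
and pick an open `P ∋ 1` with `P⁻¹ * P ⊆ W`. If `G = S * P` with `S` countable, choose for each
`s ∈ S` with `s * P` meeting `H` a point `hₛ ∈ H ∩ s * P`. Any `h ∈ H` lies in some such `s * P`,
so `hₛ⁻¹ * h ∈ P⁻¹ * P ⊆ W`, i.e. `h ∈ hₛ * V`.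
-/

open scoped Pointwise

open Set

def IsCountablySyndetic {K : Type*} [Mul K] (A : Set K) : Prop :=
  ∃ T : Set K, T.Countable ∧ T * A = univ

namespace IsCountablySyndetic

variable {K : Type*} {A B : Set K}

theorem mono [Mul K] (hA : IsCountablySyndetic A) (hAB : A ⊆ B) : IsCountablySyndetic B := by
  obtain ⟨T, hT, hTA⟩ := hA
  exact ⟨T, hT, univ_subset_iff.mp (hTA ▸ mul_subset_mul_left hAB)⟩

theorem of_smul [Semigroup K] {a : K} (h : IsCountablySyndetic (a • A)) : IsCountablySyndetic A := by
  obtain ⟨T, hT, hTA⟩ := h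
  refine ⟨T * {a}, mul_singleton (b := a) ▸ hT.image _, ?_⟩
  rwa [mul_assoc, singleton_mul]

theorem subtype_preimage_inv_mul [Group K] {P : Set K} (hP : IsCountablySyndetic P) (H : Subgroup K) :
    IsCountablySyndetic (((↑) : H → K) ⁻¹' (P⁻¹ * P)) := by
  classical
  obtain ⟨S, hS, hSP⟩ := hP
  -- a representative of `H ∩ s * P`, junk when that set is empty
  let rep : K → H := fun s =>
    if hs : ∃ h : H, (h : K) ∈ s • P then hs.choose else 1
  refine ⟨rep '' S, hS.image rep, eq_univ_of_forall fun h => ?_⟩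
  obtain ⟨s, hsS, p, hpP, hsp⟩ : (h : K) ∈ S * P := hSP ▸ mem_univ _
  have hs : ∃ h' : H, (h' : K) ∈ s • P := ⟨h, p, hpP, hsp⟩
  obtain ⟨p', hp'P, hrep⟩ : (rep s : K) ∈ s • P := by
    simpa only [rep, dif_pos hs] using hs.choose_spec
  refine ⟨rep s, mem_image_of_mem rep hsS, (rep s)⁻¹ * h, ?_, mul_inv_cancel_left _ _⟩
  refine ⟨p'⁻¹, inv_mem_inv.mpr hp'P, p, hpP, ?_⟩
  simp only [Subgroup.coe_mul, Subgroup.coe_inv, ← hrep, ← hsp, smul_eq_mul, mul_inv_rev,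
    mul_assoc, inv_mul_cancel_left]

end IsCountablySyndetic

theorem isCountablySyndetic_of_isOpen {K : Type*} [Group K] [TopologicalSpace K] [ContinuousMul K]
    (h : ∀ U : Set K, IsOpen U → (1 : K) ∈ U → IsCountablySyndetic U) {U : Set K} (hU : IsOpen U)
    (hne : U.Nonempty) : IsCountablySyndetic U := by
  obtain ⟨u, hu⟩ := hne
  exact IsCountablySyndetic.of_smul (h _ (hU.smul u⁻¹) (by simpa [mem_smul_set_iff_inv_smul_mem]))

theorem exists_isOpen_one_mem_inv_mul_subset {G : Type*} [Group G] [TopologicalSpace G]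
    [IsTopologicalGroup G] {U : Set G} (hU : U ∈ nhds (1 : G)) :
    ∃ P : Set G, IsOpen P ∧ (1 : G) ∈ P ∧ P⁻¹ * P ⊆ U := by
  obtain ⟨V, hV, h1V, hVU⟩ := exists_open_nhds_one_mul_subset hU
  refine ⟨V ∩ V⁻¹, hV.inter hV.inv, ⟨h1V, by simpa using h1V⟩, ?_⟩
  rw [inter_inv, inv_inv]
  exact (mul_subset_mul inter_subset_right inter_subset_left).trans hVU

theorem aleph0_bounded_subgroup {G : Type*} [Group G] [TopologicalSpace G] [IsTopologicalGroup G]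
    (hG : ∀ U : Set G, IsOpen U → U.Nonempty → ∃ T : Set G, T.Countable ∧ T * U = Set.univ)
    (H : Subgroup G) (V : Set H) (hV : IsOpen V) (hne : V.Nonempty) :
    ∃ T : Set H, T.Countable ∧ T * V = Set.univ := by
  refine isCountablySyndetic_of_isOpen (fun U hU h1U => ?_) hV hne
  obtain ⟨W, hW, rfl⟩ := isOpen_induced_iff.mp hU
  obtain ⟨P, hP, h1P, hPW⟩ := exists_isOpen_one_mem_inv_mul_subset (hW.mem_nhds h1U)
  exact (IsCountablySyndetic.subtype_preimage_inv_mul (hG P hP ⟨1, h1P⟩) H).mono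
    (preimage_mono hPW)
end

section
/- A metrizable topological group is SIN if and only if it admits a compatible bi-invariant metric (a metric inducing the topology with d(gx, gy) = d(x, y) = d(xg, yg) for all g, x, y). -/
/-- `G` is SIN: the identity has a neighborhood basis of conjugation-invariant open sets. -/
def IsSIN (G : Type*) [Group G] [TopologicalSpace G] : Prop :=
  ∀ U ∈ nhds (1 : G), ∃ V ∈ nhds (1 : G),
    IsOpen V ∧ V ⊆ U ∧ ∀ g : G, (fun x => g * x * g⁻¹) '' V = V

/-! If `G` is SIN, a conjugation-invariant neighbourhood `V` of `1` gives an entourage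
`{(x, y) | y * x⁻¹ ∈ V}` of the right uniformity that is invariant under every map
`x ↦ g * x * h`; so these maps are uniformly equicontinuous. Taking a metric `d` inducing the
right uniformity, `sup_{g,h} min (d (g x h) (g y h)) 1` is then a bi-invariant metric inducing
the same uniformity. Conversely, the balls around `1` of a bi-invariant metric are
conjugation invariant. -/

open Filter Set Topology Uniformity

section SIN

variable {G : Type*} [Group G]

theorem IsSIN.exists_conj_invariant_subset [TopologicalSpace G] (hG : IsSIN G) {U : Set G}
    (hU : U ∈ 𝓝 (1 : G)) : ∃ V ∈ 𝓝 (1 : G), V ⊆ U ∧ ∀ g x, x ∈ V → g * x * g⁻¹ ∈ V := by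
  obtain ⟨V, hV, -, hVU, hconj⟩ := hG U hU
  exact ⟨V, hV, hVU, fun g x hx => hconj g ▸ mem_image_of_mem _ hx⟩

theorem IsSIN.uniformEquicontinuous_mul_mul [UniformSpace G] [IsRightUniformGroup G]
    (hG : IsSIN G) : UniformEquicontinuous fun p : G × G => fun x => p.1 * x * p.2 := by
  intro U hU
  rw [uniformity_eq_comap_mul_inv_nhds_one] at hU ⊢
  obtain ⟨W, hW, hWU⟩ := hU
  obtain ⟨V, hV, hVW, hconj⟩ := hG.exists_conj_invariant_subset hW
  filter_upwards [preimage_mem_comap hV] with xy hxy p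
  apply hWU
  have : p.1 * xy.2 * p.2 * (p.1 * xy.1 * p.2)⁻¹ = p.1 * (xy.2 * xy.1⁻¹) * p.1⁻¹ := by group
  simpa only [mem_preimage, this] using hVW (hconj p.1 _ hxy)

theorem isSIN_of_dist_mul_eq [PseudoMetricSpace G]
    (hinv : ∀ g x y : G, dist (g * x) (g * y) = dist x y ∧ dist (x * g) (y * g) = dist x y) :
    IsSIN G := by
  intro U hU
  obtain ⟨ε, hε, hball⟩ := Metric.mem_nhds_iff.1 hU
  have hconj : ∀ g x : G, dist (g * x * g⁻¹) 1 = dist x 1 := fun g x =>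
    calc dist (g * x * g⁻¹) 1 = dist (g * x * g⁻¹) (g * 1 * g⁻¹) := by simp
      _ = dist x 1 := by rw [(hinv g⁻¹ _ _).2, (hinv g _ _).1]
  refine ⟨Metric.ball 1 ε, Metric.ball_mem_nhds 1 hε, Metric.isOpen_ball, hball, fun g => ?_⟩
  refine (image_subset_iff.2 ?_).antisymm fun x hx => ⟨g⁻¹ * x * g, ?_, by group⟩
  · rintro x hx
    simpa [Metric.mem_ball, hconj] using hx
  · simpa using (hconj g⁻¹ x).trans_lt hx

end SIN

section BiInvariantDist

variable {G : Type*} [Group G]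

-- Truncating at `1` keeps the family bounded; an unbounded `⨆` in `ℝ` would be the junk value `0`.
noncomputable def biInvariantDist [PseudoMetricSpace G] (x y : G) : ℝ :=
  ⨆ p : G × G, min (dist (p.1 * x * p.2) (p.1 * y * p.2)) 1

variable [PseudoMetricSpace G]

theorem bddAbove_range_min_dist_mul_mul (x y : G) :
    BddAbove (range fun p : G × G => min (dist (p.1 * x * p.2) (p.1 * y * p.2)) 1) :=
  ⟨1, forall_mem_range.2 fun _ => min_le_right _ _⟩

theorem min_dist_le_biInvariantDist (x y : G) : min (dist x y) 1 ≤ biInvariantDist x y :=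
  le_ciSup_of_le (bddAbove_range_min_dist_mul_mul x y) (1, 1) (by simp)

theorem biInvariantDist_le {x y : G} {ε : ℝ}
    (hle : ∀ g h : G, dist (g * x * h) (g * y * h) ≤ ε) : biInvariantDist x y ≤ ε :=
  ciSup_le fun p => (min_le_left _ _).trans (hle p.1 p.2)

theorem biInvariantDist_self (x : G) : biInvariantDist x x = 0 := by
  simp [biInvariantDist]

theorem biInvariantDist_comm (x y : G) : biInvariantDist x y = biInvariantDist y x := by
  simp only [biInvariantDist, dist_comm]

theorem min_one_le_min_one_add_min_one {a b c : ℝ} (hb : 0 ≤ b) (hc : 0 ≤ c) (h : a ≤ b + c) :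
    min a 1 ≤ min b 1 + min c 1 := by
  grind

theorem biInvariantDist_triangle (x y z : G) :
    biInvariantDist x z ≤ biInvariantDist x y + biInvariantDist y z :=
  ciSup_le fun p => (min_one_le_min_one_add_min_one dist_nonneg dist_nonneg
    (dist_triangle _ _ _)).trans <| add_le_add
      (le_ciSup (bddAbove_range_min_dist_mul_mul x y) p)
      (le_ciSup (bddAbove_range_min_dist_mul_mul y z) p)

theorem biInvariantDist_mul_left (g x y : G) :
    biInvariantDist (g * x) (g * y) = biInvariantDist x y := by
  simp only [biInvariantDist, ← mul_assoc]
  exact ((Equiv.mulRight g).prodCongr (Equiv.refl G)).iSup_comp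
    (g := fun p : G × G => min (dist (p.1 * x * p.2) (p.1 * y * p.2)) 1)

theorem biInvariantDist_mul_right (g x y : G) :
    biInvariantDist (x * g) (y * g) = biInvariantDist x y := by
  simp only [biInvariantDist, mul_assoc]
  exact ((Equiv.refl G).prodCongr (Equiv.mulLeft g)).iSup_comp
    (g := fun p : G × G => min (dist (p.1 * (x * p.2)) (p.1 * (y * p.2))) 1)

end BiInvariantDist

noncomputable abbrev biInvariantMetricSpace (G : Type*) [Group G] [MetricSpace G] :
    MetricSpace G where
  dist := biInvariantDist
  dist_self := biInvariantDist_self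
  dist_comm := biInvariantDist_comm
  dist_triangle := biInvariantDist_triangle
  eq_of_dist_eq_zero {x y} h := by
    have hmin : min (dist x y) 1 ≤ 0 := (min_dist_le_biInvariantDist x y).trans_eq h
    exact dist_le_zero.1 ((min_le_iff.1 hmin).resolve_right zero_lt_one.not_ge)

theorem biInvariantMetricSpace_toUniformSpace {G : Type*} [Group G] [MetricSpace G]
    (h : UniformEquicontinuous fun p : G × G => fun x => p.1 * x * p.2) :
    (biInvariantMetricSpace G).toUniformSpace = ‹MetricSpace G›.toUniformSpace := by
  refine UniformSpace.ext <|
    (@Metric.uniformity_basis_dist G (biInvariantMetricSpace G).toPseudoMetricSpace).ext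
      Metric.uniformity_basis_dist (fun ε hε => ?_) fun ε hε => ?_
  · obtain ⟨δ, hδ, hδε⟩ := Metric.uniformEquicontinuous_iff.1 h (ε / 2) (half_pos hε)
    refine ⟨δ, hδ, fun xy hxy => ?_⟩
    exact (biInvariantDist_le fun g h => (hδε _ _ hxy (g, h)).le).trans_lt (half_lt_self hε)
  · refine ⟨min ε 1, lt_min hε one_pos, fun xy hxy => ?_⟩
    by_contra hεxy
    exact ((min_le_min_right 1 (not_lt.1 hεxy)).trans (min_dist_le_biInvariantDist _ _)).not_gt hxy

theorem metrizable_isSIN_iff_biInvariant_metric {G : Type*} [Group G] [TopologicalSpace G]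
    [IsTopologicalGroup G] [TopologicalSpace.MetrizableSpace G] :
    IsSIN G ↔ ∃ m : MetricSpace G,
      m.toUniformSpace.toTopologicalSpace = (inferInstance : TopologicalSpace G) ∧
      ∀ g x y : G, m.dist (g * x) (g * y) = m.dist x y ∧ m.dist (x * g) (y * g) = m.dist x y := by
  constructor
  · intro hG
    let _ := IsTopologicalGroup.rightUniformSpace G
    -- The right uniformity is countably generated, hence induced by some metric.
    have : (𝓤 G).IsCountablyGenerated := comap.isCountablyGenerated (𝓝 1) _
    let _ := UniformSpace.metricSpace G
    have : IsRightUniformGroup G := { toIsTopologicalGroup := ‹_›, uniformity_eq := rfl }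
    refine ⟨biInvariantMetricSpace G, ?_, fun g x y =>
      ⟨biInvariantDist_mul_left g x y, biInvariantDist_mul_right g x y⟩⟩
    rw [biInvariantMetricSpace_toUniformSpace (IsSIN.uniformEquicontinuous_mul_mul hG)]
    rfl
  · rintro ⟨m, hm, hinv⟩
    subst hm
    exact isSIN_of_dist_mul_eq hinv
end
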